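/- Let (X_i, Y_i), i = 1, ..., n+1, be exchangeable random pairs taking values in ℝ^p × ℝ, let f̂ : ℝ^p → ℝ be a fixed measurable function and v : ℝ^p → (0, ∞) a fixed measurable weight function. Define nonconformity scores R_i = |Y_i − f̂(X_i)| · v(X_i) for i = 1, ..., n+1. Let α ∈ (0,1) satisfy ⌈(1−α)(n+1)⌉ ≤ n, and let q̂ be the ⌈(1−α)(n+1)⌉-th smallest value among R_1, ..., R_n. Then P(Y_{n+1} ∈ [f̂(X_{n+1}) − q̂/v(X_{n+1}), f̂(X_{n+1}) + q̂/v(X_{n+1})]) ≥ 1 − α; equivalently P(R_{n+1} ≤ q̂) ≥ 1 − α. -/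

import Mathlib

/-! Let `A_j` be the event that at least `k = ⌈(1-α)(n+1)⌉` of the `n+1` scores lie strictly
below `R_j`. Outside `A_{n+1}` fewer than `k` calibration scores lie below `R_{n+1}`, hence
`R_{n+1} ≤ q̂`. By exchangeability all the `A_j` have the same probability, while at every
sample point at most `n+1-k` of them occur: the lowest score `R_j` with `A_j` has `k` scores
below it, and those cannot satisfy their own `A_i`. Hence `(n+1) P(A_{n+1}) ≤ n+1-k ≤ α(n+1)`.
Since `v > 0`, the prediction interval covers `Y_{n+1}` exactly when `R_{n+1} ≤ q̂`. -/

open MeasureTheory Matrix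

/-- The `k`-th smallest value among `R 0, …, R (n-1)` (1-indexed: `k = 1` gives the
minimum), defined as the least `t` such that at least `k` of the values are `≤ t`. -/
noncomputable def kthSmallest {n : ℕ} (R : Fin n → ℝ) (k : ℕ) : ℝ :=
  sInf {t : ℝ | k ≤ (Finset.univ.filter (fun i => R i ≤ t)).card}

open Finset

section StrictRank

variable {ι α : Type*} [Fintype ι] [LinearOrder α]

def strictRank (r : ι → α) (j : ι) : ℕ := #{i | r i < r j}

lemma strictRank_comp_perm (r : ι → α) (π : Equiv.Perm ι) (j : ι) :
    strictRank (r ∘ π) j = strictRank r (π j) :=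
  card_equiv π fun i => by simp

lemma card_le_strictRank_le (r : ι → α) (k : ℕ) :
    #{j | k ≤ strictRank r j} ≤ Fintype.card ι - k := by
  classical
  set S : Finset ι := {j | k ≤ strictRank r j}
  obtain hS | hS := S.eq_empty_or_nonempty
  · simp [hS]
  obtain ⟨j₀, hj₀S, hj₀min⟩ := S.exists_min_image r hS
  have hdisj : Disjoint ({i | r i < r j₀} : Finset ι) S :=
    disjoint_left.2 fun i hi hiS => (hj₀min i hiS).not_gt (mem_filter.1 hi).2
  have hk : k ≤ strictRank r j₀ := (mem_filter.1 hj₀S).2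
  have hunion := card_le_univ (({i | r i < r j₀} : Finset ι) ∪ S)
  rw [card_union_of_disjoint hdisj] at hunion
  unfold strictRank at hk
  omega

lemma measurable_strictRank (j : ι) : Measurable fun r : ι → ℝ => strictRank r j := by
  simp only [strictRank, card_filter]
  exact Finset.measurable_sum _ fun i _ =>
    Measurable.ite (measurableSet_lt (measurable_pi_apply i) (measurable_pi_apply j))
      measurable_const measurable_const

end StrictRank

open scoped Classical in
lemma sum_measure_le_of_forall_card_le {Ω ι : Type*} [MeasurableSpace Ω] [Fintype ι]
    (μ : Measure Ω) {A : ι → Set Ω} (hA : ∀ j, MeasurableSet (A j)) {m : ℕ}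
    (hm : ∀ ω, #{j | ω ∈ A j} ≤ m) :
    ∑ j, μ (A j) ≤ m * μ Set.univ := by
  calc ∑ j, μ (A j) = ∫⁻ ω, ∑ j, (A j).indicator 1 ω ∂μ := by
        rw [lintegral_finsetSum _ fun j _ => measurable_one.indicator (hA j)]
        simp only [lintegral_indicator_one (hA _)]
    _ ≤ ∫⁻ _, (m : ENNReal) ∂μ := lintegral_mono fun ω => by
        simpa [Set.indicator_apply] using (Nat.cast_le (α := ENNReal)).2 (hm ω)
    _ = m * μ Set.univ := lintegral_const _

section Exchangeable

variable {Ω ι β : Type*} [MeasurableSpace Ω] [MeasurableSpace β] {P : Measure Ω}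

def Exchangeable (P : Measure Ω) (Z : ι → Ω → β) : Prop :=
  ∀ π : Equiv.Perm ι, P.map (fun ω i => Z (π i) ω) = P.map (fun ω i => Z i ω)

lemma Exchangeable.comp {Z : ι → Ω → β} (hZ : Exchangeable P Z) (hZm : ∀ i, Measurable (Z i))
    {γ : Type*} [MeasurableSpace γ] {g : β → γ} (hg : Measurable g) :
    Exchangeable P fun i ω => g (Z i ω) := by
  intro π
  have hG : Measurable fun (z : ι → β) i => g (z i) := by fun_prop
  change P.map ((fun z i => g (z i)) ∘ fun ω i => Z (π i) ω)
    = P.map ((fun z i => g (z i)) ∘ fun ω i => Z i ω)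
  rw [← Measure.map_map hG (by fun_prop), ← Measure.map_map hG (by fun_prop), hZ π]

lemma Exchangeable.measure_perm_preimage {Z : ι → Ω → β} (hZ : Exchangeable P Z)
    (hZm : ∀ i, Measurable (Z i)) (π : Equiv.Perm ι) {B : Set (ι → β)} (hB : MeasurableSet B) :
    P {ω | (fun i => Z (π i) ω) ∈ B} = P {ω | (fun i => Z i ω) ∈ B} := by
  change P ((fun ω i => Z (π i) ω) ⁻¹' B) = P ((fun ω i => Z i ω) ⁻¹' B)
  rw [← Measure.map_apply (by fun_prop) hB, hZ π, Measure.map_apply (by fun_prop) hB]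

variable [Fintype ι] {R : ι → Ω → ℝ}

lemma Exchangeable.measure_le_strictRank_eq (hR : Exchangeable P R)
    (hRm : ∀ i, Measurable (R i)) (k : ℕ) (j j' : ι) :
    P {ω | k ≤ strictRank (R · ω) j} = P {ω | k ≤ strictRank (R · ω) j'} := by
  classical
  have hB : MeasurableSet {r : ι → ℝ | k ≤ strictRank r j'} :=
    measurableSet_le measurable_const (measurable_strictRank j')
  convert hR.measure_perm_preimage hRm (Equiv.swap j' j) hB using 4 with ω ω
  · show _ ↔ k ≤ strictRank ((R · ω) ∘ Equiv.swap j' j) j'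
    rw [strictRank_comp_perm, Equiv.swap_apply_left]
  · exact Iff.rfl

lemma Exchangeable.card_mul_measure_le_strictRank_le [IsProbabilityMeasure P]
    (hR : Exchangeable P R) (hRm : ∀ i, Measurable (R i)) (k : ℕ) (j : ι) :
    Fintype.card ι * P {ω | k ≤ strictRank (R · ω) j} ≤ (Fintype.card ι - k : ℕ) := by
  have hA (j' : ι) : MeasurableSet {ω | k ≤ strictRank (R · ω) j'} :=
    measurableSet_le measurable_const ((measurable_strictRank j').comp (by fun_prop))
  calc Fintype.card ι * P {ω | k ≤ strictRank (R · ω) j}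
      = ∑ j', P {ω | k ≤ strictRank (R · ω) j'} := by
        simp [hR.measure_le_strictRank_eq hRm k _ j]
    _ ≤ (Fintype.card ι - k : ℕ) * P Set.univ :=
        sum_measure_le_of_forall_card_le P hA fun ω => by
          convert card_le_strictRank_le (R · ω) k using 4
          exact Iff.rfl
    _ = (Fintype.card ι - k : ℕ) := by simp

lemma Exchangeable.measure_le_strictRank_le_ofReal [IsProbabilityMeasure P]
    (hR : Exchangeable P R) (hRm : ∀ i, Measurable (R i)) {k : ℕ} {α : ℝ}
    (hk : (1 - α) * Fintype.card ι ≤ k) (hkι : k ≤ Fintype.card ι) (j : ι) :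
    P {ω | k ≤ strictRank (R · ω) j} ≤ ENNReal.ofReal α := by
  have hι : (Fintype.card ι : ENNReal) ≠ 0 := Nat.cast_ne_zero.2 (Fintype.card_pos_iff.2 ⟨j⟩).ne'
  refine (ENNReal.mul_le_mul_iff_right hι (ENNReal.natCast_ne_top _)).1 ?_
  refine (hR.card_mul_measure_le_strictRank_le hRm k j).trans ?_
  rw [← ENNReal.ofReal_natCast, ← ENNReal.ofReal_natCast (Fintype.card ι),
    ← ENNReal.ofReal_mul (Nat.cast_nonneg _)]
  refine ENNReal.ofReal_le_ofReal ?_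
  rw [Nat.cast_sub hkι]
  linarith

end Exchangeable

lemma le_card_filter_lt_of_kthSmallest_lt {n k : ℕ} (R : Fin n → ℝ) (hk : k ≤ n) {x : ℝ}
    (hx : kthSmallest R k < x) : k ≤ #{i | R i < x} := by
  obtain ⟨b, hb⟩ := (Set.finite_range R).bddAbove
  have hne : {t : ℝ | k ≤ #{i | R i ≤ t}}.Nonempty :=
    ⟨b, by simpa [filter_true_of_mem fun i _ => hb (Set.mem_range_self i)] using hk⟩
  obtain ⟨t, hkt, htx⟩ := exists_lt_of_csInf_lt hne hx
  exact hkt.trans <|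
    card_le_card <| monotone_filter_right _ fun i _ (hi : R i ≤ t) => hi.trans_lt htx

lemma le_kthSmallest_castSucc_of_strictRank_last_lt {n k : ℕ} (r : Fin (n + 1) → ℝ)
    (hk : k ≤ n) (hr : strictRank r (Fin.last n) < k) :
    r (Fin.last n) ≤ kthSmallest (fun i : Fin n => r i.castSucc) k := by
  by_contra! hlt
  have hcalib := le_card_filter_lt_of_kthSmallest_lt _ hk hlt
  refine hr.not_ge <| hcalib.trans <|
    card_le_card_of_injOn Fin.castSucc (fun i hi => ?_) (Fin.castSucc_injective n).injOn
  simpa using hi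

/-- **Marginal coverage of weighted split conformal prediction (lower bound).**
For exchangeable pairs `(X_i, Y_i)`, `i = 1, …, n+1`, any fixed measurable predictor `f̂`
and fixed measurable positive weight `v`, scores `R_i = |Y_i − f̂(X_i)|·v(X_i)`, and
`q̂` the `⌈(1−α)(n+1)⌉`-th smallest of `R_1, …, R_n`, the prediction interval
`[f̂(X_{n+1}) − q̂/v(X_{n+1}), f̂(X_{n+1}) + q̂/v(X_{n+1})]` covers `Y_{n+1}` with
probability at least `1 − α`; equivalently `P(R_{n+1} ≤ q̂) ≥ 1 − α`. -/
theorem lwcp_marginal_coverage_lower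
    {Ω : Type*} [MeasurableSpace Ω] (P : Measure Ω) [IsProbabilityMeasure P]
    (p n : ℕ)
    (Z : Fin (n + 1) → Ω → (Fin p → ℝ) × ℝ)
    (hZmeas : ∀ i, Measurable (Z i))
    (hexch : ∀ π : Equiv.Perm (Fin (n + 1)),
      Measure.map (fun ω => fun i => Z (π i) ω) P
        = Measure.map (fun ω => fun i => Z i ω) P)
    (fhat : (Fin p → ℝ) → ℝ) (hf : Measurable fhat)
    (v : (Fin p → ℝ) → ℝ) (hv : Measurable v) (hvpos : ∀ x, 0 < v x)
    (α : ℝ) (hα : α ∈ Set.Ioo (0 : ℝ) 1)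
    (hk : ⌈(1 - α) * ((n : ℝ) + 1)⌉₊ ≤ n)
    (R : Fin (n + 1) → Ω → ℝ)
    (hR : ∀ i ω, R i ω = |(Z i ω).2 - fhat (Z i ω).1| * v (Z i ω).1)
    (qhat : Ω → ℝ)
    (hq : ∀ ω, qhat ω =
      kthSmallest (fun i : Fin n => R i.castSucc ω) ⌈(1 - α) * ((n : ℝ) + 1)⌉₊) :
    ENNReal.ofReal (1 - α)
        ≤ P {ω | (Z (Fin.last n) ω).2 ∈
            Set.Icc (fhat (Z (Fin.last n) ω).1 - qhat ω / v (Z (Fin.last n) ω).1)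
                    (fhat (Z (Fin.last n) ω).1 + qhat ω / v (Z (Fin.last n) ω).1)}
      ∧ ENNReal.ofReal (1 - α) ≤ P {ω | R (Fin.last n) ω ≤ qhat ω} := by
  set k := ⌈(1 - α) * ((n : ℝ) + 1)⌉₊
  have hR_eq : R = fun i ω => |(Z i ω).2 - fhat (Z i ω).1| * v (Z i ω).1 :=
    funext fun i => funext (hR i)
  have hRm : ∀ i, Measurable (R i) := by rw [hR_eq]; intro i; fun_prop
  have hRexch : Exchangeable P R := hR_eq ▸ Exchangeable.comp hexch hZmeas
    (g := fun z => |z.2 - fhat z.1| * v z.1) (by fun_prop)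
  set A := {ω | k ≤ strictRank (R · ω) (Fin.last n)}
  have hA : MeasurableSet A :=
    measurableSet_le measurable_const ((measurable_strictRank _).comp (by fun_prop))
  have hPA : P A ≤ ENNReal.ofReal α :=
    hRexch.measure_le_strictRank_le_ofReal hRm (by simpa using Nat.le_ceil _) (by rw [Fintype.card_fin]; omega) _
  have hAc : Aᶜ ⊆ {ω | R (Fin.last n) ω ≤ qhat ω} := fun ω hω =>
    show R (Fin.last n) ω ≤ qhat ω from
      hq ω ▸ le_kthSmallest_castSucc_of_strictRank_last_lt (R · ω) hk (not_le.1 hω)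
  have hcov : ENNReal.ofReal (1 - α) ≤ P {ω | R (Fin.last n) ω ≤ qhat ω} :=
    calc ENNReal.ofReal (1 - α) = 1 - ENNReal.ofReal α := by
          rw [ENNReal.ofReal_sub _ hα.1.le, ENNReal.ofReal_one]
      _ ≤ 1 - P A := tsub_le_tsub_left hPA 1
      _ = P Aᶜ := (prob_compl_eq_one_sub hA).symm
      _ ≤ _ := measure_mono hAc
  refine ⟨le_of_le_of_eq hcov (congr_arg P (Set.ext fun ω => ?_)), hcov⟩
  rw [Set.mem_ofPred_eq, Set.mem_ofPred_eq, ← Set.mem_Icc_iff_abs_le, abs_sub_comm,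
    le_div_iff₀ (hvpos _), hR]
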